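/- arXiv:2212.10424 — 2 statements merged into one kernel-verified Lean document; each statement's English description precedes it below -/
import Mathlib

section
/- Let N ≥ 1 and let Q₁₁, Q₁₂, Q₂₂ be real N×N diagonal matrices such that Q = [[Q₁₁, Q₁₂], [Q₁₂, Q₂₂]] is symmetric positive definite and Q₁₂ is negative definite. Write Q⁻¹ = [[P₁₁, P₁₂], [P₁₂ᵀ, P₂₂]] in N×N blocks. Then P₁₂ = P₁₁·(−Q₁₂)·Q₂₂⁻¹, and P₁₂ is a positive definite diagonal matrix. -/
open Matrix

/-! With all four blocks diagonal, `Q` is a direct sum over `i` of the `2 × 2` matrices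
`!![a i, b i; b i, c i]`, so `Q⁻¹` is obtained by inverting each of them:
`P₁₁ = diagonal (c / d)` and `P₁₂ = diagonal (-b / d)` with `d = a c - b²`. Each `2 × 2`
block is a principal submatrix of `Q`, hence positive definite, so `c > 0` and `d > 0`. -/

namespace Matrix

variable {n : Type*} [DecidableEq n]

theorem inv_fromBlocks_diagonal [Fintype n] {K : Type*} [Field K] (a b b' c : n → K)
    (hd : ∀ i, a i * c i - b i * b' i ≠ 0) :
    (fromBlocks (diagonal a) (diagonal b) (diagonal b') (diagonal c))⁻¹ =
      fromBlocks (diagonal fun i => c i / (a i * c i - b i * b' i))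
        (diagonal fun i => -b i / (a i * c i - b i * b' i))
        (diagonal fun i => -b' i / (a i * c i - b i * b' i))
        (diagonal fun i => a i / (a i * c i - b i * b' i)) := by
  refine inv_eq_right_inv ?_
  simp only [fromBlocks_multiply, diagonal_mul_diagonal, diagonal_add]
  rw [← fromBlocks_one, ← diagonal_one, ← diagonal_zero]
  congr 1 <;> congr 1 <;> funext i <;>
    rw [← mul_div_assoc, ← mul_div_assoc, ← add_div, div_eq_iff (hd i)] <;> ring

theorem fromBlocks_diagonal_submatrix {α : Type*} [Zero α] (a b b' c : n → α) (i : n) :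
    (fromBlocks (diagonal a) (diagonal b) (diagonal b') (diagonal c)).submatrix
      ![Sum.inl i, Sum.inr i] ![Sum.inl i, Sum.inr i] = !![a i, b i; b' i, c i] := by
  ext j k
  fin_cases j <;> fin_cases k <;> simp

theorem inv_diagonal_of_ne_zero [Fintype n] {K : Type*} [Field K] {v : n → K}
    (hv : ∀ i, v i ≠ 0) :
    (diagonal v)⁻¹ = diagonal v⁻¹ :=
  inv_eq_right_inv <| by
    rw [diagonal_mul_diagonal, ← diagonal_one]
    exact congrArg diagonal (funext fun i => mul_inv_cancel₀ (hv i))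

theorem PosDef.fromBlocks_diagonal_pos {a b c : n → ℝ}
    (h : (fromBlocks (diagonal a) (diagonal b) (diagonal b) (diagonal c)).PosDef) (i : n) :
    0 < c i ∧ 0 < a i * c i - b i * b i := by
  have h₂ : (!![a i, b i; b i, c i]).PosDef := by
    rw [← fromBlocks_diagonal_submatrix]
    exact h.submatrix fun j k hjk => by fin_cases j <;> fin_cases k <;> simp_all
  refine ⟨?_, by simpa [det_fin_two_of] using h₂.det_pos⟩
  simpa using h₂.diag_pos (i := 1)

end Matrix

theorem stmt_3_general {N : ℕ}
    (Q₁₁ Q₁₂ Q₂₂ : Matrix (Fin N) (Fin N) ℝ)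
    (hQ₁₁d : Q₁₁.IsDiag) (hQ₁₂d : Q₁₂.IsDiag) (hQ₂₂d : Q₂₂.IsDiag)
    (hQ : (Matrix.fromBlocks Q₁₁ Q₁₂ Q₁₂ Q₂₂).PosDef)
    (hQ₁₂ : (-Q₁₂).PosDef)
    (P₁₁ P₁₂ : Matrix (Fin N) (Fin N) ℝ)
    (hP₁₁ : P₁₁ = (Matrix.fromBlocks Q₁₁ Q₁₂ Q₁₂ Q₂₂)⁻¹.toBlocks₁₁)
    (hP₁₂ : P₁₂ = (Matrix.fromBlocks Q₁₁ Q₁₂ Q₁₂ Q₂₂)⁻¹.toBlocks₁₂) :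
    P₁₂ = P₁₁ * (-Q₁₂) * Q₂₂⁻¹ ∧ P₁₂.IsDiag ∧ P₁₂.PosDef := by
  obtain ⟨a, rfl⟩ : ∃ a, Q₁₁ = diagonal a := ⟨_, hQ₁₁d.diagonal_diag.symm⟩
  obtain ⟨b, rfl⟩ : ∃ b, Q₁₂ = diagonal b := ⟨_, hQ₁₂d.diagonal_diag.symm⟩
  obtain ⟨c, rfl⟩ : ∃ c, Q₂₂ = diagonal c := ⟨_, hQ₂₂d.diagonal_diag.symm⟩
  rw [diagonal_neg, posDef_diagonal_iff] at hQ₁₂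
  have hc i := (hQ.fromBlocks_diagonal_pos i).1
  have hd i := (hQ.fromBlocks_diagonal_pos i).2
  rw [inv_fromBlocks_diagonal _ _ _ _ fun i => (hd i).ne'] at hP₁₁ hP₁₂
  subst hP₁₁ hP₁₂
  refine ⟨?_, isDiag_diagonal _, posDef_diagonal_iff.2 fun i => div_pos (hQ₁₂ i) (hd i)⟩
  rw [toBlocks_fromBlocks₁₁, toBlocks_fromBlocks₁₂, inv_diagonal_of_ne_zero fun i => (hc i).ne',
    diagonal_neg, diagonal_mul_diagonal, diagonal_mul_diagonal]
  congr 1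
  funext i
  rw [Pi.inv_apply]
  field_simp [(hc i).ne']

/-- The off-diagonal block of the inverse: `P₁₂ = P₁₁ (−Q₁₂) Q₂₂⁻¹`, and `P₁₂` is a
positive definite diagonal matrix when `Q₁₂ ≺ 0`. -/
theorem stmt_3 {N : ℕ} (hN : 1 ≤ N)
    (Q₁₁ Q₁₂ Q₂₂ : Matrix (Fin N) (Fin N) ℝ)
    (hQ₁₁d : Q₁₁.IsDiag) (hQ₁₂d : Q₁₂.IsDiag) (hQ₂₂d : Q₂₂.IsDiag)
    (hQ : (Matrix.fromBlocks Q₁₁ Q₁₂ Q₁₂ Q₂₂).PosDef)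
    (hQ₁₂ : (-Q₁₂).PosDef)
    (P₁₁ P₁₂ : Matrix (Fin N) (Fin N) ℝ)
    (hP₁₁ : P₁₁ = (Matrix.fromBlocks Q₁₁ Q₁₂ Q₁₂ Q₂₂)⁻¹.toBlocks₁₁)
    (hP₁₂ : P₁₂ = (Matrix.fromBlocks Q₁₁ Q₁₂ Q₁₂ Q₂₂)⁻¹.toBlocks₁₂) :
    P₁₂ = P₁₁ * (-Q₁₂) * Q₂₂⁻¹ ∧ P₁₂.IsDiag ∧ P₁₂.PosDef :=
  stmt_3_general Q₁₁ Q₁₂ Q₂₂ hQ₁₁d hQ₁₂d hQ₂₂d hQ hQ₁₂ P₁₁ P₁₂ hP₁₁ hP₁₂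
end

section
/- Let P be a symmetric positive semidefinite n×n real matrix, A_cl an n×n real matrix, B₂ an n×m real matrix, C a p×n real matrix, and γ > 0, and suppose (A_cl)ᵀP + P·A_cl + γ⁻¹CᵀC + γ⁻¹P·B₂B₂ᵀ·P is negative semidefinite. Let x : ℝ → ℝⁿ be differentiable with continuous derivative, d : ℝ → ℝᵐ be continuous, x′(t) = A_cl·x(t) + B₂·d(t) for all t, and x(0) = 0. Then for every T ≥ 0, ∫₀ᵀ ‖C·x(t)‖² dt ≤ γ² ∫₀ᵀ ‖d(t)‖² dt, where ‖·‖ is the Euclidean norm. -/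
/-!
Take the quadratic storage function `V = xᵀ P x`, which is nonnegative and vanishes at `t = 0`.
Along trajectories `V' = 2 (A x + B d)ᵀ P x`; bounding the cross term `2 dᵀ Bᵀ P x` by Young's
inequality and the rest by the matrix inequality gives the dissipation inequality
`V' ≤ γ ‖d‖² - γ⁻¹ ‖C x‖²`. Integrating over `[0, T]` yields `0 ≤ V T ≤ γ ∫ ‖d‖² - γ⁻¹ ∫ ‖C x‖²`.
-/

open Matrix

variable {ι : Type*} [Fintype ι]

theorem HasDerivAt.dotProduct {u v : ℝ → ι → ℝ} {u' v' : ι → ℝ} {t : ℝ}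
    (hu : HasDerivAt u u' t) (hv : HasDerivAt v v' t) :
    HasDerivAt (fun s => u s ⬝ᵥ v s) (u' ⬝ᵥ v t + u t ⬝ᵥ v') t := by
  simpa [_root_.dotProduct, Finset.sum_add_distrib] using
    HasDerivAt.fun_sum fun i _ => (hasDerivAt_pi.mp hu i).mul (hasDerivAt_pi.mp hv i)

theorem HasDerivAt.matrix_mulVec {κ : Type*} (M : Matrix κ ι ℝ) {x : ℝ → ι → ℝ} {x' : ι → ℝ}
    {t : ℝ} (hx : HasDerivAt x x' t) : HasDerivAt (fun s => M *ᵥ x s) (M *ᵥ x') t :=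
  hasDerivAt_pi.mpr fun i => by
    simpa [mulVec, _root_.dotProduct] using
      HasDerivAt.fun_sum fun j _ => (hasDerivAt_pi.mp hx j).const_mul (M i j)

theorem hasDerivAt_dotProduct_mulVec_self {P : Matrix ι ι ℝ} (hP : P.IsSymm)
    {x : ℝ → ι → ℝ} {x' : ι → ℝ} {t : ℝ} (hx : HasDerivAt x x' t) :
    HasDerivAt (fun s => x s ⬝ᵥ P *ᵥ x s) (2 * (x' ⬝ᵥ P *ᵥ x t)) t := by
  convert hx.dotProduct (hx.matrix_mulVec P) using 1
  rw [← dotProduct_transpose_mulVec, hP.eq]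
  ring

theorem dotProduct_self_eq_sum_sq (v : ι → ℝ) : v ⬝ᵥ v = ∑ i, v i ^ 2 := by
  simp only [dotProduct, sq]

theorem two_mul_dotProduct_le {γ : ℝ} (hγ : 0 < γ) (u v : ι → ℝ) :
    2 * (u ⬝ᵥ v) ≤ γ * (u ⬝ᵥ u) + γ⁻¹ * (v ⬝ᵥ v) := by
  have hsq : 0 ≤ (γ • u - v) ⬝ᵥ (γ • u - v) := by
    simpa using dotProduct_self_star_nonneg (γ • u - v)
  simp only [sub_dotProduct, dotProduct_sub, smul_dotProduct, dotProduct_smul, smul_eq_mul,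
    dotProduct_comm v u] at hsq
  refine le_of_mul_le_mul_left ?_ hγ
  calc γ * (2 * (u ⬝ᵥ v)) ≤ γ * (γ * (u ⬝ᵥ u)) + v ⬝ᵥ v := by linarith
    _ = γ * (γ * (u ⬝ᵥ u) + γ⁻¹ * (v ⬝ᵥ v)) := by field_simp

noncomputable def hInfMatrix {m p : Type*} [Fintype m] [Fintype p] (P A : Matrix ι ι ℝ)
    (B : Matrix ι m ℝ) (C : Matrix p ι ℝ) (γ : ℝ) : Matrix ι ι ℝ :=
  Aᵀ * P + P * A + γ⁻¹ • (Cᵀ * C) + γ⁻¹ • (P * B * Bᵀ * P)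

section Dissipation

variable {m p : Type*} [Fintype m] [Fintype p] {P A : Matrix ι ι ℝ} {B : Matrix ι m ℝ}
  {C : Matrix p ι ℝ} {γ : ℝ}

theorem dotProduct_hInfMatrix_mulVec (hP : P.IsSymm) (x : ι → ℝ) :
    x ⬝ᵥ hInfMatrix P A B C γ *ᵥ x = 2 * (A *ᵥ x ⬝ᵥ P *ᵥ x)
      + γ⁻¹ * (C *ᵥ x ⬝ᵥ C *ᵥ x) + γ⁻¹ * (Bᵀ *ᵥ P *ᵥ x ⬝ᵥ Bᵀ *ᵥ P *ᵥ x) := by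
  have hP' : ∀ y, x ⬝ᵥ P *ᵥ y = y ⬝ᵥ P *ᵥ x := fun y => by
    rw [← dotProduct_transpose_mulVec, hP.eq]
  simp only [hInfMatrix, add_mulVec, smul_mulVec, ← mulVec_mulVec, dotProduct_add,
    dotProduct_smul, smul_eq_mul, dotProduct_transpose_mulVec, hP', dotProduct_comm (P *ᵥ x)]
  ring

theorem dissipation_inequality (hP : P.IsSymm) (hγ : 0 < γ)
    (hLMI : (-hInfMatrix P A B C γ).PosSemidef) (x : ι → ℝ) (d : m → ℝ) :
    2 * ((A *ᵥ x + B *ᵥ d) ⬝ᵥ P *ᵥ x) ≤ γ * (d ⬝ᵥ d) - γ⁻¹ * (C *ᵥ x ⬝ᵥ C *ᵥ x) := by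
  have hquad := hLMI.dotProduct_mulVec_nonneg x
  simp only [star_trivial, neg_mulVec, dotProduct_neg, dotProduct_hInfMatrix_mulVec hP] at hquad
  have hcross : B *ᵥ d ⬝ᵥ P *ᵥ x = d ⬝ᵥ Bᵀ *ᵥ P *ᵥ x := by
    rw [dotProduct_transpose_mulVec, dotProduct_comm]
  have hyoung := two_mul_dotProduct_le hγ d (Bᵀ *ᵥ P *ᵥ x)
  rw [add_dotProduct, hcross]
  linarith

end Dissipation

theorem stmt_8_general {n m p : ℕ}
    (P : Matrix (Fin n) (Fin n) ℝ) (hP : P.PosSemidef)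
    (Acl : Matrix (Fin n) (Fin n) ℝ)
    (B₂ : Matrix (Fin n) (Fin m) ℝ) (C : Matrix (Fin p) (Fin n) ℝ)
    (γ : ℝ) (hγ : 0 < γ)
    (hLMI : (-(Aclᵀ * P + P * Acl + γ⁻¹ • (Cᵀ * C)
        + γ⁻¹ • (P * B₂ * B₂ᵀ * P))).PosSemidef)
    (x : ℝ → (Fin n → ℝ)) (d : ℝ → (Fin m → ℝ))
    (hx : Differentiable ℝ x) (hd : Continuous d)
    (hdyn : ∀ t, deriv x t = Acl.mulVec (x t) + B₂.mulVec (d t))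
    (hx0 : x 0 = 0) :
    ∀ T ≥ (0 : ℝ),
      ∫ t in (0 : ℝ)..T, (∑ i, (C.mulVec (x t)) i ^ 2) ≤
        γ ^ 2 * ∫ t in (0 : ℝ)..T, (∑ i, (d t) i ^ 2) := by
  intro T hT
  have hPsymm : P.IsSymm := isHermitian_iff_isSymm.mp hP.isHermitian
  have hxc : Continuous x := hx.continuous
  have hdiss : x T ⬝ᵥ P *ᵥ x T - x 0 ⬝ᵥ P *ᵥ x 0 ≤
      ∫ t in (0 : ℝ)..T, (γ * (d t ⬝ᵥ d t) - γ⁻¹ * (C *ᵥ x t ⬝ᵥ C *ᵥ x t)) :=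
    -- FTC as an inequality: only the upper bound of `V'`, not `V'` itself, must be integrable.
    intervalIntegral.sub_le_integral_of_hasDeriv_right_of_le hT
      (by fun_prop)
      (fun t _ => (hasDerivAt_dotProduct_mulVec_self hPsymm (hx t).hasDerivAt).hasDerivWithinAt)
      (Continuous.integrableOn_Icc (by fun_prop))
      (fun t _ => hdyn t ▸ dissipation_inequality hPsymm hγ hLMI (x t) (d t))
  have hVT : 0 ≤ x T ⬝ᵥ P *ᵥ x T := by simpa using hP.dotProduct_mulVec_nonneg (x T)
  rw [intervalIntegral.integral_sub ((by fun_prop : Continuous _).intervalIntegrable _ _)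
    ((by fun_prop : Continuous _).intervalIntegrable _ _), intervalIntegral.integral_const_mul,
    intervalIntegral.integral_const_mul, hx0, zero_dotProduct, sub_zero] at hdiss
  simp only [← dotProduct_self_eq_sum_sq]
  set energyOut := ∫ t in (0 : ℝ)..T, C *ᵥ x t ⬝ᵥ C *ᵥ x t
  set energyIn := ∫ t in (0 : ℝ)..T, d t ⬝ᵥ d t
  calc energyOut = γ * (γ⁻¹ * energyOut) := by field_simp
    _ ≤ γ * (γ * energyIn) := mul_le_mul_of_nonneg_left (by linarith) hγ.le
    _ = γ ^ 2 * energyIn := by ring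

/-- Finite-horizon L₂-gain bound: under the dissipation matrix inequality, the
closed-loop trajectory started at the origin satisfies
`∫₀ᵀ ‖C x(t)‖² dt ≤ γ² ∫₀ᵀ ‖d(t)‖² dt` (Euclidean norms, via sums of squares). -/
theorem stmt_8 {n m p : ℕ}
    (P : Matrix (Fin n) (Fin n) ℝ) (hP : P.PosSemidef)
    (Acl : Matrix (Fin n) (Fin n) ℝ)
    (B₂ : Matrix (Fin n) (Fin m) ℝ) (C : Matrix (Fin p) (Fin n) ℝ)
    (γ : ℝ) (hγ : 0 < γ)
    (hLMI : (-(Aclᵀ * P + P * Acl + γ⁻¹ • (Cᵀ * C)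
        + γ⁻¹ • (P * B₂ * B₂ᵀ * P))).PosSemidef)
    (x : ℝ → (Fin n → ℝ)) (d : ℝ → (Fin m → ℝ))
    (hx : Differentiable ℝ x) (hx' : Continuous (deriv x)) (hd : Continuous d)
    (hdyn : ∀ t, deriv x t = Acl.mulVec (x t) + B₂.mulVec (d t))
    (hx0 : x 0 = 0) :
    ∀ T ≥ (0 : ℝ),
      ∫ t in (0 : ℝ)..T, (∑ i, (C.mulVec (x t)) i ^ 2) ≤
        γ ^ 2 * ∫ t in (0 : ℝ)..T, (∑ i, (d t) i ^ 2) :=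
  stmt_8_general P hP Acl B₂ C γ hγ hLMI x d hx hd hdyn hx0
end
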